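/- In any execution of the algorithm MaxMatch, the total number of moves in which a single vertex writes True into its end variable (i.e., executes a rule after which its end variable is True while it was False before) is at most 3μ. -/

import Mathlib

open Classical

section MaxMatchPreamble

variable {V : Type*} [Fintype V] [LinearOrder V]

/-- Strict comparison on identifiers where `none` (null) counts as greater
than every identifier. -/
def optLT : Option V → Option V → Prop
  | some x, some y => x < y
  | some _, none => True
  | none, _ => False

/-- A configuration of the MaxMatch algorithm: the variables `p`, `α`, `β`
(`a`,`b` here) and the booleans `s`, `end` (`e` here) of every vertex. -/
structure MMConfig (V : Type*) where
  p : V → Option V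
  a : V → Option V
  b : V → Option V
  s : V → Bool
  e : V → Bool

/-- The local state of one vertex. -/
structure MMLocal (V : Type*) where
  p : Option V
  a : Option V
  b : Option V
  s : Bool
  e : Bool

/-- The local state of vertex `u` in configuration `C`. -/
def MMConfig.loc (C : MMConfig V) (u : V) : MMLocal V :=
  ⟨C.p u, C.a u, C.b u, C.s u, C.e u⟩

/-- `m` encodes a maximal matching of `G`: `m u = some v` iff `(u,v)` is a
matching edge, `m u = none` iff `u` is single. -/
structure MaxMatchingOn (G : SimpleGraph V) (m : V → Option V) : Prop where
  adj : ∀ u v, m u = some v → G.Adj u v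
  symm : ∀ u v, m u = some v → m v = some u
  maximal : ∀ u v, G.Adj u v → m u ≠ none ∨ m v ≠ none

/-- `Lowest(S)`: the minimum-identifier element of `S`, `none` if `S = ∅`. -/
noncomputable def lowestSet (S : Set V) : Option V :=
  if h : (Finset.univ.filter fun x => x ∈ S).Nonempty
  then some ((Finset.univ.filter fun x => x ∈ S).min' h) else none

/-- `Lowest` of a finite set of identifiers-or-null: `none` (null) elements are
greater than all identifiers, hence ignored. -/
noncomputable def lowestOpt (S : Finset (Option V)) : Option V :=
  lowestSet {x : V | some x ∈ S}

/-- Truth value of a proposition. -/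
noncomputable def pb (P : Prop) : Bool := if P then true else false

variable (G : SimpleGraph V) (m : V → Option V)

/-- The candidate set considered by `BestRematch(u)`. -/
def candSet (C : MMConfig V) (u : V) : Set V :=
  {x | G.Adj u x ∧ m x = none ∧ (C.p x = some u ∨ C.e x = false)}

/-- `BestRematch(u)`. -/
noncomputable def bestRematch (C : MMConfig V) (u : V) : Option V × Option V :=
  let a := lowestSet (candSet G m C u)
  (a, a.elim none fun w => lowestSet (candSet G m C u \ {w}))

/-- `AskFirst(u)`. -/
noncomputable def askFirst (C : MMConfig V) (u : V) : Option V :=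
  match m u with
  | none => none
  | some v =>
      if C.a u ≠ none ∧ C.a v ≠ none ∧
         2 ≤ ({C.a u, C.b u, C.a v, C.b v} : Finset (Option V)).card ∧
         (optLT (C.a u) (C.a v) ∨ (C.a u = C.a v ∧ C.b u = none) ∨
          (C.a u = C.a v ∧ C.b v ≠ none ∧ u < v))
      then C.a u else none

/-- `AskSecond(u)`. -/
noncomputable def askSecond (C : MMConfig V) (u : V) : Option V :=
  match m u with
  | none => none
  | some v =>
      if askFirst m C v ≠ none
      then lowestOpt (({C.a u, C.b u} : Finset (Option V)) \ {C.a v})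
      else none

/-- `Ask(u)`. -/
noncomputable def ask (C : MMConfig V) (u : V) : Option V :=
  if askFirst m C u = none then askSecond m C u else askFirst m C u

/-- Guard of rule `ResetEnd` (single vertices). -/
def guardResetEnd (C : MMConfig V) (x : V) : Prop :=
  C.p x = none ∧ C.e x = true

/-- Guard of rule `UpdateP` (single vertices). -/
def guardUpdateP (C : MMConfig V) (x : V) : Prop :=
  (C.p x = none ∧ ∃ w, G.Adj x w ∧ m w ≠ none ∧ C.p w = some x) ∨
  (∃ w, C.p x = some w ∧ ¬ (G.Adj x w ∧ m w ≠ none)) ∨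
  (∃ w, C.p x = some w ∧ C.p w ≠ some x)

/-- Guard of rule `UpdateEnd` (single vertices). -/
def guardUpdateEnd (C : MMConfig V) (x : V) : Prop :=
  ∃ w, C.p x = some w ∧ G.Adj x w ∧ m w ≠ none ∧ C.p w = some x ∧ C.e x ≠ C.e w

/-- `o ∈ single(N(u)) ∪ {null}`. -/
def inSNopt (u : V) (o : Option V) : Prop :=
  o = none ∨ ∃ w, o = some w ∧ G.Adj u w ∧ m w = none

/-- First part (first four disjuncts) of the guard of rule `Update`. -/
def guardUpdateA (C : MMConfig V) (u : V) : Prop :=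
  optLT (C.b u) (C.a u) ∨
  (¬ inSNopt G m u (C.a u) ∨ ¬ inSNopt G m u (C.b u)) ∨
  (C.a u = C.b u ∧ C.a u ≠ none) ∨
  ¬ inSNopt G m u (C.p u)

/-- Guard of rule `Update` (matched vertices). -/
def guardUpdate (C : MMConfig V) (u : V) : Prop :=
  guardUpdateA G m C u ∨
  ((C.a u, C.b u) ≠ bestRematch G m C u ∧
    (C.p u = none ∨ ∃ w, C.p u = some w ∧ C.p w ≠ some u ∧ C.e w = true))

/-- `p_{p_u} = u`. -/
def ppEq (C : MMConfig V) (u : V) : Prop :=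
  ∃ w, C.p u = some w ∧ C.p w = some u

/-- Value assigned to `s_u` by `MatchFirst` (`v = m_u`). -/
def mfS (C : MMConfig V) (u v : V) : Prop :=
  C.p u = askFirst m C u ∧ ppEq C u ∧ (C.p v = askSecond m C v ∨ C.p v = none)

/-- Value assigned to `end_u` by `MatchFirst` (`v = m_u`). -/
def mfE (C : MMConfig V) (u v : V) : Prop :=
  C.p u = askFirst m C u ∧ ppEq C u ∧ C.s u = true ∧
  C.p v = askSecond m C v ∧ C.e v = true

/-- Guard of rule `MatchFirst` (matched vertices). -/
def guardMatchFirst (C : MMConfig V) (u : V) : Prop :=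
  askFirst m C u ≠ none ∧ ∃ v, m u = some v ∧
    (C.p u ≠ askFirst m C u ∨ ¬ (C.s u = true ↔ mfS m C u v) ∨
     ¬ (C.e u = true ↔ mfE m C u v))

/-- Value assigned to `end_u` (and then `s_u`) by `MatchSecond` (`v = m_u`). -/
def msE (C : MMConfig V) (u v : V) : Prop :=
  C.p u = askSecond m C u ∧ ppEq C u ∧ C.p v = askFirst m C v

/-- Guard of rule `MatchSecond` (matched vertices). -/
def guardMatchSecond (C : MMConfig V) (u : V) : Prop :=
  askSecond m C u ≠ none ∧ ∃ v, m u = some v ∧ C.s v = true ∧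
    (C.p u ≠ askSecond m C u ∨ ¬ (C.e u = true ↔ msE m C u v) ∨ C.s u ≠ C.e u)

/-- Guard of rule `ResetMatch` (matched vertices). -/
def guardResetMatch (C : MMConfig V) (u : V) : Prop :=
  (askFirst m C u = none ∧ askSecond m C u = none ∧
    ¬ (C.p u = none ∧ C.s u = false ∧ C.e u = false)) ∨
  (askSecond m C u ≠ none ∧ C.p u ≠ none ∧ ∃ v, m u = some v ∧ C.s v = false)

/-- The local state of `u` after it atomically executes the command of its
highest-priority true-guard rule (its state is unchanged if no guard holds). -/
noncomputable def localNext (C : MMConfig V) (u : V) : MMLocal V :=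
  if m u = none then
    if guardResetEnd C u then ⟨C.p u, C.a u, C.b u, C.s u, false⟩
    else if guardUpdateP G m C u then
      ⟨lowestSet {w | G.Adj u w ∧ C.p w = some u}, C.a u, C.b u, C.s u, false⟩
    else if guardUpdateEnd G m C u then
      ⟨C.p u, C.a u, C.b u, C.s u, (C.p u).elim (C.e u) C.e⟩
    else C.loc u
  else
    if guardUpdate G m C u then
      ⟨none, (bestRematch G m C u).1, (bestRematch G m C u).2, false, false⟩
    else if guardMatchFirst m C u then
      ⟨askFirst m C u, C.a u, C.b u,
        pb (∃ v, m u = some v ∧ mfS m C u v),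
        pb (∃ v, m u = some v ∧ mfE m C u v)⟩
    else if guardMatchSecond m C u then
      ⟨askSecond m C u, C.a u, C.b u,
        pb (∃ v, m u = some v ∧ msE m C u v),
        pb (∃ v, m u = some v ∧ msE m C u v)⟩
    else if guardResetMatch m C u then ⟨none, C.a u, C.b u, false, false⟩
    else C.loc u

/-- `u` is activable (eligible for some rule) in `C`. -/
def Activable (C : MMConfig V) (u : V) : Prop :=
  (m u = none ∧ (guardResetEnd C u ∨ guardUpdateP G m C u ∨ guardUpdateEnd G m C u)) ∨
  (m u ≠ none ∧ (guardUpdate G m C u ∨ guardMatchFirst m C u ∨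
    guardMatchSecond m C u ∨ guardResetMatch m C u))

/-- A configuration is stable when no vertex is activable. -/
def Stable (C : MMConfig V) : Prop := ∀ u, ¬ Activable G m C u

/-- One transition of the adversarial distributed daemon: the nonempty set `A`
of activable vertices simultaneously execute their (highest-priority) rules. -/
def StepOn (C C' : MMConfig V) (A : Set V) : Prop :=
  A.Nonempty ∧ (∀ u ∈ A, Activable G m C u) ∧
  (∀ u ∈ A, C'.loc u = localNext G m C u) ∧
  (∀ u, u ∉ A → C'.loc u = C.loc u)

/-- A (maximal) execution, padded with stuttering once a stable configuration is
reached: at each index either a genuine transition occurs, or the configuration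
is stable and nothing moves.  `u ∈ act i` means `u` makes a move in transition
`i ↦ i+1`. -/
structure MMExecution (G : SimpleGraph V) (m : V → Option V) where
  cfg : ℕ → MMConfig V
  act : ℕ → Set V
  valid : ∀ i, StepOn G m (cfg i) (cfg (i+1)) (act i) ∨
    (act i = ∅ ∧ Stable G m (cfg i) ∧ cfg (i+1) = cfg i)

/-- μ: the number of matched vertices. -/
noncomputable def muV : ℕ := (Finset.univ.filter fun u : V => m u ≠ none).card

/-- σ: the number of single vertices. -/
noncomputable def sigmaV : ℕ := (Finset.univ.filter fun u : V => m u = none).card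

/-- The matching `M` as a relation. -/
def Mrel (a b : V) : Prop := m a = some b

/-- The output edge set `M⁺` of a configuration, as a relation. -/
def Mplus (C : MMConfig V) (a b : V) : Prop :=
  (m a = some b ∧ C.p a = none ∧ C.p b = none) ∨
  (G.Adj a b ∧ m a ≠ some b ∧ C.p a = some b ∧ C.p b = some a)

/-- `(x,u,v,y)` is a 3-augmenting path on `(G, M')`. -/
def IsAug3 (M' : V → V → Prop) (x u v y : V) : Prop :=
  x ≠ u ∧ x ≠ v ∧ x ≠ y ∧ u ≠ v ∧ u ≠ y ∧ v ≠ y ∧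
  G.Adj x u ∧ G.Adj u v ∧ G.Adj v y ∧
  M' u v ∧ ¬ M' x u ∧ ¬ M' v y

end MaxMatchPreamble

/-!
Charge each move in which a single `x` copies `end = True` from its parent to that parent `w`,
a matched vertex with `p_w = x` and `end_w = True`. Between two moves charged to `w`, `end_w`
must rise from `False` to `True`: otherwise `w` keeps pointing at the first single, whose `end`
stays `True`. A matched vertex's `end` rises at most twice: between its first two rises its
partner must move; the partner's last move before the second rise leaves it pointing at a single
that points back; and from the second rise on the two partners sit as First and Second towards
their singles, where `end_u` can never fall again. Hence at most three moves are charged to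
each of the `μ` matched vertices.
-/

section Order

variable {V : Type*} [LinearOrder V]

lemma optLT_asymm {a b : Option V} (h : optLT a b) : ¬ optLT b a := by
  cases a <;> cases b <;> simp_all [optLT, lt_asymm]

lemma optLT_irrefl (a : Option V) : ¬ optLT a a := by
  cases a <;> simp [optLT]

end Order

lemma pb_eq_true {P : Prop} : pb P = true ↔ P := by
  unfold pb; split_ifs <;> simp_all

def pab {V : Type*} (C : MMConfig V) (u : V) : Option V × Option V × Option V :=
  (C.p u, C.a u, C.b u)

lemma pab_eq_iff {V : Type*} {C C' : MMConfig V} {u : V} :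
    pab C' u = pab C u ↔ C'.p u = C.p u ∧ C'.a u = C.a u ∧ C'.b u = C.b u := by
  simp [pab]

section AskFirst

variable {V : Type*} [LinearOrder V] {m : V → Option V} {C C' : MMConfig V} {u v : V}

lemma askFirst_ne_none (huv : m u = some v) (h : askFirst m C u ≠ none) :
    askFirst m C u = C.a u ∧ (optLT (C.a u) (C.a v) ∨ (C.a u = C.a v ∧ C.b u = none) ∨
      (C.a u = C.a v ∧ C.b v ≠ none ∧ u < v)) := by
  simp only [askFirst, huv] at h ⊢
  split_ifs at h ⊢ with hc
  · exact ⟨rfl, hc.2.2.2⟩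
  · exact absurd rfl h

lemma askFirst_both (huv : m u = some v) (hvu : m v = some u) (hu : askFirst m C u ≠ none)
    (hv : askFirst m C v ≠ none) : C.a u = C.a v ∧ C.b u = none := by
  obtain ⟨-, hu⟩ := askFirst_ne_none huv hu
  obtain ⟨-, hv⟩ := askFirst_ne_none hvu hv
  rcases hu with hlt | hb | ⟨he, hbv, hlt⟩
  · rcases hv with hlt' | ⟨he', -⟩ | ⟨he', -⟩
    · exact absurd hlt' (optLT_asymm hlt)
    all_goals rw [he'] at hlt; exact absurd hlt (optLT_irrefl _)
  · exact hb
  · rcases hv with hlt' | ⟨-, hb'⟩ | ⟨-, -, hlt'⟩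
    · rw [he] at hlt'; exact absurd hlt' (optLT_irrefl _)
    · exact absurd hb' hbv
    · exact absurd hlt' hlt.not_gt

lemma askFirst_congr (huv : m u = some v) (hu : pab C' u = pab C u) (hv : pab C' v = pab C v) :
    askFirst m C' u = askFirst m C u := by
  obtain ⟨-, hau, hbu⟩ := pab_eq_iff.mp hu
  obtain ⟨-, hav, hbv⟩ := pab_eq_iff.mp hv
  simp only [askFirst, huv, hau, hbu, hav, hbv]

lemma guardUpdateA_congr (G : SimpleGraph V) (h : pab C' u = pab C u) :
    guardUpdateA G m C' u ↔ guardUpdateA G m C u := by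
  obtain ⟨hp, ha, hb⟩ := pab_eq_iff.mp h
  simp only [guardUpdateA, hp, ha, hb]

end AskFirst

section AskSecond

variable {V : Type*} [Fintype V] [LinearOrder V] {m : V → Option V} {C C' : MMConfig V}
  {u v : V}

lemma askSecond_eq_none_of_askFirst_ne_none (huv : m u = some v) (hvu : m v = some u)
    (h : askFirst m C u ≠ none) : askSecond m C u = none := by
  simp only [askSecond, huv]
  split_ifs with hv
  · obtain ⟨ha, hb⟩ := askFirst_both huv hvu h hv
    unfold lowestOpt lowestSet
    rw [dif_neg]
    rintro ⟨x, hx⟩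
    simp [ha, hb] at hx
  · rfl

lemma askFirst_eq_none_of_askSecond_ne_none (huv : m u = some v) (hvu : m v = some u)
    (h : askSecond m C u ≠ none) : askFirst m C u = none :=
  not_not.mp fun h' => h (askSecond_eq_none_of_askFirst_ne_none huv hvu h')

lemma askSecond_congr (huv : m u = some v) (hvu : m v = some u) (hu : pab C' u = pab C u)
    (hv : pab C' v = pab C v) : askSecond m C' u = askSecond m C u := by
  obtain ⟨-, hau, hbu⟩ := pab_eq_iff.mp hu
  obtain ⟨-, hav, hbv⟩ := pab_eq_iff.mp hv
  simp only [askSecond, huv, askFirst_congr hvu hv hu, hau, hbu, hav]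

end AskSecond

lemma MMConfig.loc_eq_loc_iff {V : Type*} {C C' : MMConfig V} {u : V} :
    C'.loc u = C.loc u ↔ C'.p u = C.p u ∧ C'.a u = C.a u ∧ C'.b u = C.b u ∧
      C'.s u = C.s u ∧ C'.e u = C.e u := by
  simp [MMConfig.loc]

lemma not_guardUpdateP_of_parent {V : Type*} {G : SimpleGraph V} {m : V → Option V}
    {C : MMConfig V} {x w : V} (hw : m w ≠ none) (hadj : G.Adj x w)
    (hpx : C.p x = some w) (hpw : C.p w = some x) : ¬ guardUpdateP G m C x := by
  rintro (⟨h, -⟩ | ⟨w', h, hn⟩ | ⟨w', h, hn⟩) <;> simp_all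

section Step

variable {V : Type*} [Fintype V] [LinearOrder V] {G : SimpleGraph V} {m : V → Option V}
  (E : MMExecution G m) {t : ℕ} {u v w x : V}

lemma MMExecution.loc_succ (t : ℕ) (u : V) :
    (E.cfg (t+1)).loc u = localNext G m (E.cfg t) u ∨ (E.cfg (t+1)).loc u = (E.cfg t).loc u := by
  rcases E.valid t with ⟨-, -, hA, hN⟩ | ⟨-, -, hC⟩
  · by_cases hu : u ∈ E.act t
    · exact .inl (hA u hu)
    · exact .inr (hN u hu)
  · exact .inr (by rw [hC])

lemma MMExecution.single_step_cases (t : ℕ) (hx : m x = none) :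
    (E.cfg (t+1)).loc x = (E.cfg t).loc x ∨
    (guardResetEnd (E.cfg t) x ∧ (E.cfg (t+1)).e x = false) ∨
    (guardUpdateP G m (E.cfg t) x ∧ (E.cfg (t+1)).e x = false) ∨
    (guardUpdateEnd G m (E.cfg t) x ∧ (E.cfg (t+1)).p x = (E.cfg t).p x ∧
      (E.cfg (t+1)).e x = ((E.cfg t).p x).elim ((E.cfg t).e x) (E.cfg t).e) := by
  rcases E.loc_succ t x with h | h
  · rw [localNext, if_pos hx] at h
    split_ifs at h with h1 h2 h3
    · exact .inr (.inl ⟨h1, congrArg MMLocal.e h⟩)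
    · exact .inr (.inr (.inl ⟨h2, congrArg MMLocal.e h⟩))
    · exact .inr (.inr (.inr ⟨h3, congrArg MMLocal.p h, congrArg MMLocal.e h⟩))
    · exact .inl h
  · exact .inl h

lemma MMExecution.matched_step_cases (t : ℕ) (huv : m u = some v) :
    (E.cfg (t+1)).loc u = (E.cfg t).loc u ∨
    (guardUpdate G m (E.cfg t) u ∧ (E.cfg (t+1)).s u = false ∧ (E.cfg (t+1)).e u = false) ∨
    (¬ guardUpdate G m (E.cfg t) u ∧ guardMatchFirst m (E.cfg t) u ∧
      (E.cfg (t+1)).p u = askFirst m (E.cfg t) u ∧ (E.cfg (t+1)).a u = (E.cfg t).a u ∧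
      (E.cfg (t+1)).b u = (E.cfg t).b u ∧ (E.cfg (t+1)).s u = pb (mfS m (E.cfg t) u v) ∧
      (E.cfg (t+1)).e u = pb (mfE m (E.cfg t) u v)) ∨
    (¬ guardUpdate G m (E.cfg t) u ∧ guardMatchSecond m (E.cfg t) u ∧
      (E.cfg (t+1)).p u = askSecond m (E.cfg t) u ∧ (E.cfg (t+1)).a u = (E.cfg t).a u ∧
      (E.cfg (t+1)).b u = (E.cfg t).b u ∧ (E.cfg (t+1)).s u = pb (msE m (E.cfg t) u v) ∧
      (E.cfg (t+1)).e u = pb (msE m (E.cfg t) u v)) ∨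
    (guardResetMatch m (E.cfg t) u ∧ (E.cfg (t+1)).s u = false ∧ (E.cfg (t+1)).e u = false) := by
  rcases E.loc_succ t u with h | h
  · rw [localNext, if_neg (by simp [huv])] at h
    simp only [huv, Option.some.injEq, exists_eq_left'] at h
    split_ifs at h with h1 h2 h3 h4
    · exact .inr (.inl ⟨h1, congrArg MMLocal.s h, congrArg MMLocal.e h⟩)
    · exact .inr (.inr (.inl ⟨h1, h2, congrArg MMLocal.p h, congrArg MMLocal.a h,
        congrArg MMLocal.b h, congrArg MMLocal.s h, congrArg MMLocal.e h⟩))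
    · exact .inr (.inr (.inr (.inl ⟨h1, h3, congrArg MMLocal.p h, congrArg MMLocal.a h,
        congrArg MMLocal.b h, congrArg MMLocal.s h, congrArg MMLocal.e h⟩)))
    · exact .inr (.inr (.inr (.inr ⟨h4, congrArg MMLocal.s h, congrArg MMLocal.e h⟩)))
    · exact .inl h
  · exact .inl h

lemma MMExecution.single_parent_succ (hx : m x = none) (hw : m w ≠ none) (hadj : G.Adj x w)
    (hpx : (E.cfg t).p x = some w) (hpw : (E.cfg t).p w = some x) :
    (E.cfg (t+1)).p x = some w ∧
      ((E.cfg (t+1)).e x = (E.cfg t).e x ∨ (E.cfg (t+1)).e x = (E.cfg t).e w) := by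
  rcases E.single_step_cases t hx with h | ⟨⟨hp, -⟩, -⟩ | ⟨hg, -⟩ | ⟨-, hp, he⟩
  · obtain ⟨hp, -, -, -, he⟩ := MMConfig.loc_eq_loc_iff.mp h
    exact ⟨hp.trans hpx, .inl he⟩
  · simp [hpx] at hp
  · exact absurd hg (not_guardUpdateP_of_parent hw hadj hpx hpw)
  · rw [hpx] at he
    exact ⟨hp.trans hpx, .inr he⟩

lemma MMExecution.single_end_rise (hx : m x = none) (he0 : (E.cfg t).e x = false)
    (he1 : (E.cfg (t+1)).e x = true) :
    ∃ w, (E.cfg t).p x = some w ∧ G.Adj x w ∧ m w ≠ none ∧ (E.cfg t).p w = some x ∧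
      (E.cfg t).e w = true := by
  rcases E.single_step_cases t hx with h | ⟨-, he⟩ | ⟨-, he⟩ | ⟨⟨w, hpx, hadj, hw, hpw, -⟩, -, he⟩
  · simp_all [MMConfig.loc_eq_loc_iff]
  · simp_all
  · simp_all
  · rw [hpx, he1] at he
    exact ⟨w, hpx, hadj, hw, hpw, he.symm⟩

lemma MMExecution.matched_p_succ_of_end (huv : m u = some v)
    (h1 : (E.cfg (t+1)).e u = true) : (E.cfg (t+1)).p u = (E.cfg t).p u := by
  rcases E.matched_step_cases t huv with h | ⟨-, -, he⟩ | ⟨-, -, hp, -, -, -, he⟩ |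
    ⟨-, -, hp, -, -, -, he⟩ | ⟨-, -, he⟩
  · exact (MMConfig.loc_eq_loc_iff.mp h).1
  · simp_all
  · rw [he] at h1
    rw [hp, (pb_eq_true.mp h1).1]
  · rw [he] at h1
    rw [hp, (pb_eq_true.mp h1).1]
  · simp_all

end Step

section Engaged

variable {V : Type*} [LinearOrder V] (G : SimpleGraph V) (m : V → Option V)

def Engaged (C : MMConfig V) (u x : V) : Prop :=
  ¬ guardUpdateA G m C u ∧ C.p u = some x ∧ C.p x = some u

variable {G m} {C : MMConfig V} {u x : V}

lemma Engaged.adj_single (h : Engaged G m C u x) : G.Adj u x ∧ m x = none := by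
  obtain ⟨hA, hp, -⟩ := h
  have : inSNopt G m u (C.p u) := not_not.mp fun hn => hA (.inr (.inr (.inr hn)))
  obtain ⟨w, hw, hadj, hs⟩ := this.resolve_left (by simp [hp])
  obtain rfl : x = w := by simpa [hp] using hw
  exact ⟨hadj, hs⟩

end Engaged

section Holds

variable {V : Type*} [Fintype V] [LinearOrder V] (G : SimpleGraph V) (m : V → Option V)

/-- Under `FirstHolds`, the only move `f` can make is a `MatchFirst` that leaves `p_f`, `α_f`,
`β_f`, `s_f` unchanged; under `SecondHolds`, the only move `s` can make is a `MatchSecond` that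
leaves `p_s`, `α_s`, `β_s` unchanged and sets `end_s`. -/
def FirstHolds (C : MMConfig V) (f s x : V) : Prop :=
  Engaged G m C f x ∧ askFirst m C f = some x ∧ C.s f = true ∧ C.p s = askSecond m C s

def SecondHolds (C : MMConfig V) (s f y : V) : Prop :=
  Engaged G m C s y ∧ askSecond m C s = some y ∧ C.p f = askFirst m C f ∧ C.s f = true

variable {G m} {C : MMConfig V} {u v x : V}

lemma Engaged.not_guardUpdate (h : Engaged G m C u x) : ¬ guardUpdate G m C u := by
  obtain ⟨hA, hp, hx⟩ := h
  rintro (h | ⟨-, h | ⟨w, hw, hne, -⟩⟩)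
  · exact hA h
  · simp [hp] at h
  · obtain rfl : w = x := by simpa [hp] using hw.symm
    exact hne hx

variable (E : MMExecution G m) {t : ℕ}

lemma MMExecution.engaged_succ (hu : m u ≠ none) (h : Engaged G m (E.cfg t) u x)
    (hpab : pab (E.cfg (t+1)) u = pab (E.cfg t) u) : Engaged G m (E.cfg (t+1)) u x := by
  obtain ⟨hA, hp, hx⟩ := h
  obtain ⟨hadj, hxs⟩ := Engaged.adj_single ⟨hA, hp, hx⟩
  exact ⟨(guardUpdateA_congr G hpab).not.mpr hA, (pab_eq_iff.mp hpab).1.trans hp,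
    (E.single_parent_succ hxs hu hadj.symm hx hp).1⟩

lemma MMExecution.firstHolds_step (huv : m u = some v) (hvu : m v = some u)
    (h : FirstHolds G m (E.cfg t) u v x) :
    pab (E.cfg (t+1)) u = pab (E.cfg t) u ∧ (E.cfg (t+1)).s u = true ∧
      ((E.cfg t).e u = true → (E.cfg t).e v = true → (E.cfg (t+1)).e u = true) := by
  obtain ⟨hE, hask, hs, hpv⟩ := h
  have hask1 : askFirst m (E.cfg t) u ≠ none := by simp [hask]
  have hask2 := askSecond_eq_none_of_askFirst_ne_none huv hvu hask1
  have hmfS : mfS m (E.cfg t) u v := ⟨hE.2.1.trans hask.symm, ⟨x, hE.2⟩, .inl hpv⟩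
  rcases E.matched_step_cases t huv with h | ⟨hU, -⟩ | ⟨-, -, hp', ha', hb', hs', he'⟩ |
    ⟨-, hMS, -⟩ | ⟨hR, -⟩
  · obtain ⟨hp', ha', hb', hs', he'⟩ := MMConfig.loc_eq_loc_iff.mp h
    exact ⟨pab_eq_iff.mpr ⟨hp', ha', hb'⟩, hs'.trans hs, fun heu _ => he'.trans heu⟩
  · exact absurd hU hE.not_guardUpdate
  · refine ⟨pab_eq_iff.mpr ⟨hp'.trans (hask.trans hE.2.1.symm), ha', hb'⟩,
      hs'.trans (pb_eq_true.mpr hmfS), fun _ hev => he'.trans (pb_eq_true.mpr ?_)⟩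
    exact ⟨hmfS.1, hmfS.2.1, hs, hpv, hev⟩
  · exact absurd hask2 hMS.1
  · rcases hR with ⟨h1, -⟩ | ⟨h2, -⟩
    · exact absurd h1 hask1
    · exact absurd hask2 h2

lemma MMExecution.secondHolds_step (huv : m u = some v) (hvu : m v = some u)
    (h : SecondHolds G m (E.cfg t) u v x) :
    pab (E.cfg (t+1)) u = pab (E.cfg t) u ∧
      ((E.cfg t).e u = true → (E.cfg (t+1)).e u = true) := by
  obtain ⟨hE, hask, hpv, hsv⟩ := h
  have hask2 : askSecond m (E.cfg t) u ≠ none := by simp [hask]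
  have hask1 := askFirst_eq_none_of_askSecond_ne_none huv hvu hask2
  rcases E.matched_step_cases t huv with h | ⟨hU, -⟩ | ⟨-, hMF, -⟩ |
    ⟨-, -, hp', ha', hb', -, he'⟩ | ⟨hR, -⟩
  · obtain ⟨hp', ha', hb', -, he'⟩ := MMConfig.loc_eq_loc_iff.mp h
    exact ⟨pab_eq_iff.mpr ⟨hp', ha', hb'⟩, fun heu => he'.trans heu⟩
  · exact absurd hU hE.not_guardUpdate
  · exact absurd hask1 hMF.1
  · refine ⟨pab_eq_iff.mpr ⟨hp'.trans (hask.trans hE.2.1.symm), ha', hb'⟩,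
      fun _ => he'.trans (pb_eq_true.mpr ?_)⟩
    exact ⟨hE.2.1.trans hask.symm, ⟨x, hE.2⟩, hpv⟩
  · rcases hR with ⟨-, h2, -⟩ | ⟨-, -, v', hv', hsv'⟩
    · exact absurd h2 hask2
    · obtain rfl : v' = v := by simpa [huv] using hv'.symm
      simp [hsv] at hsv'

end Holds

section Persistence

variable {V : Type*} [Fintype V] [LinearOrder V] {G : SimpleGraph V} {m : V → Option V}
  (E : MMExecution G m) {u v x y : V} {t r : ℕ}

lemma MMExecution.firstHolds_succ (huv : m u = some v) (hvu : m v = some u)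
    (h : FirstHolds G m (E.cfg t) u v x) (hv : pab (E.cfg (t+1)) v = pab (E.cfg t) v) :
    FirstHolds G m (E.cfg (t+1)) u v x := by
  obtain ⟨hpab, hs, -⟩ := E.firstHolds_step huv hvu h
  obtain ⟨hE, hask, -, hpv⟩ := h
  refine ⟨E.engaged_succ (by simp [huv]) hE hpab, (askFirst_congr huv hpab hv).trans hask, hs, ?_⟩
  rw [askSecond_congr hvu huv hv hpab, (pab_eq_iff.mp hv).1, hpv]

lemma MMExecution.secondHolds_succ (huv : m u = some v) (hvu : m v = some u)
    (h : SecondHolds G m (E.cfg t) u v x) (hv : pab (E.cfg (t+1)) v = pab (E.cfg t) v)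
    (hsv : (E.cfg (t+1)).s v = true) : SecondHolds G m (E.cfg (t+1)) u v x := by
  obtain ⟨hpab, -⟩ := E.secondHolds_step huv hvu h
  obtain ⟨hE, hask, hpv, -⟩ := h
  refine ⟨E.engaged_succ (by simp [huv]) hE hpab, (askSecond_congr huv hvu hpab hv).trans hask,
    ?_, hsv⟩
  rw [askFirst_congr hvu hv hpab, (pab_eq_iff.mp hv).1, hpv]

lemma MMExecution.pair_holds_forever (huv : m u = some v) (hvu : m v = some u)
    (hF : FirstHolds G m (E.cfg r) u v x) (hS : SecondHolds G m (E.cfg r) v u y) :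
    ∀ t, r ≤ t → FirstHolds G m (E.cfg t) u v x ∧ SecondHolds G m (E.cfg t) v u y := by
  intro t ht
  induction t, ht using Nat.le_induction with
  | base => exact ⟨hF, hS⟩
  | succ t _ ih =>
    obtain ⟨hF, hS⟩ := ih
    obtain ⟨hpabu, hsu, -⟩ := E.firstHolds_step huv hvu hF
    exact ⟨E.firstHolds_succ huv hvu hF (E.secondHolds_step hvu huv hS).1,
      E.secondHolds_succ hvu huv hS hpabu hsu⟩

lemma MMExecution.second_end_forever (huv : m u = some v) (hvu : m v = some u)
    (hF : FirstHolds G m (E.cfg r) u v x) (hS : SecondHolds G m (E.cfg r) v u y)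
    (hev : (E.cfg r).e v = true) : ∀ t, r ≤ t → (E.cfg t).e v = true := by
  intro t ht
  induction t, ht using Nat.le_induction with
  | base => exact hev
  | succ t ht ih =>
    exact (E.secondHolds_step hvu huv (E.pair_holds_forever huv hvu hF hS t ht).2).2 ih

lemma MMExecution.first_end_forever (huv : m u = some v) (hvu : m v = some u)
    (hF : FirstHolds G m (E.cfg r) u v x) (hS : SecondHolds G m (E.cfg r) v u y)
    (heu : (E.cfg r).e u = true) (hev : (E.cfg r).e v = true) :
    ∀ t, r ≤ t → (E.cfg t).e u = true := by
  intro t ht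
  induction t, ht using Nat.le_induction with
  | base => exact heu
  | succ t ht ih =>
    exact (E.firstHolds_step huv hvu (E.pair_holds_forever huv hvu hF hS t ht).1).2.2 ih
      (E.second_end_forever huv hvu hF hS hev t ht)

/-- `end_u` is set to `True` only by `MatchFirst`, with value `mfE`, or by `MatchSecond`, with
value `msE` and guard `s_v = True`. -/
lemma MMExecution.holds_of_end_rise (huv : m u = some v) (he0 : (E.cfg r).e u = false)
    (he1 : (E.cfg (r+1)).e u = true) :
    ∃ x, (FirstHolds G m (E.cfg r) u v x ∧ (E.cfg r).e v = true) ∨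
      SecondHolds G m (E.cfg r) u v x := by
  rcases E.matched_step_cases r huv with h | ⟨-, -, he⟩ | ⟨hU, -, -, -, -, -, he⟩ |
    ⟨hU, hMS, -, -, -, -, he⟩ | ⟨-, -, he⟩
  · simp_all [MMConfig.loc_eq_loc_iff]
  · simp_all
  · obtain ⟨hp, ⟨x, hpu, hpx⟩, hs, hpv, hev⟩ := pb_eq_true.mp (he ▸ he1)
    exact ⟨x, .inl ⟨⟨⟨fun h => hU (.inl h), hpu, hpx⟩, hp.symm.trans hpu, hs, hpv⟩, hev⟩⟩
  · obtain ⟨hp, ⟨x, hpu, hpx⟩, hpv⟩ := pb_eq_true.mp (he ▸ he1)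
    obtain ⟨-, v', hv', hsv, -⟩ := hMS
    obtain rfl : v' = v := by simpa [huv] using hv'.symm
    exact ⟨x, .inr ⟨⟨fun h => hU (.inl h), hpu, hpx⟩, hp.symm.trans hpu, hpv, hsv⟩⟩
  · simp_all

lemma MMExecution.end_forever_of_engaged_partner (huv : m u = some v) (hvu : m v = some u)
    (he0 : (E.cfg r).e u = false) (he1 : (E.cfg (r+1)).e u = true)
    (hv : Engaged G m (E.cfg r) v y) : ∀ t, r < t → (E.cfg t).e u = true := by
  obtain ⟨x, ⟨hF, hev⟩ | hS⟩ := E.holds_of_end_rise huv he0 he1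
  · have hS : SecondHolds G m (E.cfg r) v u y :=
      ⟨hv, hF.2.2.2.symm.trans hv.2.1, hF.1.2.1.trans hF.2.1.symm, hF.2.2.1⟩
    obtain ⟨hF', hS'⟩ := E.pair_holds_forever huv hvu hF hS (r+1) (by omega)
    exact E.first_end_forever huv hvu hF' hS' he1 ((E.secondHolds_step hvu huv hS).2 hev)
  · have hF : FirstHolds G m (E.cfg r) v u y :=
      ⟨hv, hS.2.2.1.symm.trans hv.2.1, hS.2.2.2, hS.1.2.1.trans hS.2.1.symm⟩
    obtain ⟨hF', hS'⟩ := E.pair_holds_forever hvu huv hF hS (r+1) (by omega)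
    exact E.second_end_forever hvu huv hF' hS' he1

end Persistence

section Sequences

lemma exists_rise_of_false_of_true {b : ℕ → Bool} {i j : ℕ} (hij : i ≤ j) (hi : b i = false)
    (hj : b j = true) : ∃ t, i ≤ t ∧ t < j ∧ b t = false ∧ b (t+1) = true := by
  induction j, hij using Nat.le_induction with
  | base => simp_all
  | succ j hij ih =>
    cases hbj : b j
    · exact ⟨j, hij, j.lt_succ_self, hbj, hj⟩
    · obtain ⟨t, h1, h2, h3⟩ := ih hbj
      exact ⟨t, h1, by omega, h3⟩

lemma exists_last_change {α : Type*} (f : ℕ → α) {b : ℕ} (h : ∃ σ < b, f (σ+1) ≠ f σ) :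
    ∃ σ < b, f (σ+1) ≠ f σ ∧ ∀ t, σ < t → t < b → f (t+1) = f t := by
  induction b with
  | zero => obtain ⟨σ, hσ, -⟩ := h; omega
  | succ b ih =>
    by_cases hb : f (b+1) = f b
    · obtain ⟨σ, hσ, hne⟩ := h
      have hσb : σ < b := lt_of_le_of_ne (Nat.lt_succ_iff.mp hσ) (by rintro rfl; exact hne hb)
      obtain ⟨σ', hσ', hne', hst⟩ := ih ⟨σ, hσb, hne⟩
      refine ⟨σ', by omega, hne', fun t h1 h2 => ?_⟩
      rcases Nat.lt_succ_iff_lt_or_eq.mp h2 with h2 | rfl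
      · exact hst t h1 h2
      · exact hb
    · exact ⟨b, b.lt_succ_self, hb, fun t h1 h2 => by omega⟩

lemma eq_of_forall_succ_eq {α : Type*} {f : ℕ → α} {a b : ℕ}
    (h : ∀ t, a ≤ t → t < b → f (t+1) = f t) : ∀ t, a ≤ t → t ≤ b → f t = f a := by
  intro t ht htb
  induction t, ht using Nat.le_induction with
  | base => rfl
  | succ t ht ih => rw [h t ht htb, ih (by omega)]

end Sequences

section Rises

variable {V : Type*} [Fintype V] [LinearOrder V] {G : SimpleGraph V} {m : V → Option V}
  (E : MMExecution G m) {u v y : V} {r : ℕ}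

lemma MMExecution.end_true_of_partner_steady (huv : m u = some v) (hvu : m v = some u)
    (he0 : (E.cfg r).e u = false) (he1 : (E.cfg (r+1)).e u = true) {N : ℕ}
    (hsteady : ∀ t, r ≤ t → t < N → (E.cfg (t+1)).loc v = (E.cfg t).loc v) :
    ∀ t, r < t → t ≤ N → (E.cfg t).e u = true := by
  have hv : ∀ t, r ≤ t → t < N → pab (E.cfg (t+1)) v = pab (E.cfg t) v ∧
      (E.cfg (t+1)).s v = (E.cfg t).s v ∧ (E.cfg (t+1)).e v = (E.cfg t).e v := fun t h1 h2 => by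
    obtain ⟨hp, ha, hb, hs, he⟩ := MMConfig.loc_eq_loc_iff.mp (hsteady t h1 h2)
    exact ⟨pab_eq_iff.mpr ⟨hp, ha, hb⟩, hs, he⟩
  intro t ht htN
  replace ht : r + 1 ≤ t := ht
  obtain ⟨x, ⟨hF, hev⟩ | hS⟩ := E.holds_of_end_rise huv he0 he1
  · suffices FirstHolds G m (E.cfg t) u v x ∧ (E.cfg t).e v = true ∧ (E.cfg t).e u = true from
      this.2.2
    induction t, ht using Nat.le_induction with
    | base =>
      obtain ⟨hpab, -, he⟩ := hv r le_rfl htN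
      exact ⟨E.firstHolds_succ huv hvu hF hpab, he.trans hev, he1⟩
    | succ t ht ih =>
      obtain ⟨hF, hev, heu⟩ := ih (by omega)
      obtain ⟨hpab, -, he⟩ := hv t (by omega) htN
      exact ⟨E.firstHolds_succ huv hvu hF hpab, he.trans hev,
        (E.firstHolds_step huv hvu hF).2.2 heu hev⟩
  · suffices SecondHolds G m (E.cfg t) u v x ∧ (E.cfg t).e u = true from this.2
    induction t, ht using Nat.le_induction with
    | base =>
      obtain ⟨hpab, hs, -⟩ := hv r le_rfl htN
      exact ⟨E.secondHolds_succ huv hvu hS hpab (hs.trans hS.2.2.2), he1⟩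
    | succ t ht ih =>
      obtain ⟨hS, heu⟩ := ih (by omega)
      obtain ⟨hpab, hs, -⟩ := hv t (by omega) htN
      exact ⟨E.secondHolds_succ huv hvu hS hpab (hs.trans hS.2.2.2),
        (E.secondHolds_step huv hvu hS).2 heu⟩

/-- Only `MatchFirst` and `MatchSecond` can leave `s_v` or `end_v` true, and both require
`v` to be engaged beforehand and keep its pointer. -/
lemma MMExecution.engaged_of_change (hvu : m v = some u)
    (hchg : (E.cfg (r+1)).loc v ≠ (E.cfg r).loc v)
    (hse : (E.cfg (r+1)).s v = true ∨ (E.cfg (r+1)).e v = true) :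
    ∃ y, Engaged G m (E.cfg (r+1)) v y := by
  suffices ∃ y, Engaged G m (E.cfg r) v y ∧ pab (E.cfg (r+1)) v = pab (E.cfg r) v by
    obtain ⟨y, hE, hpab⟩ := this
    exact ⟨y, E.engaged_succ (by simp [hvu]) hE hpab⟩
  rcases E.matched_step_cases r hvu with h | ⟨-, hs, he⟩ | ⟨hU, -, hp, ha, hb, hs, he⟩ |
    ⟨hU, -, hp, ha, hb, hs, he⟩ | ⟨-, hs, he⟩
  · exact absurd h hchg
  · simp_all
  · have hmfS : mfS m (E.cfg r) v u := by
      rcases hse with h | h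
      · exact pb_eq_true.mp (hs ▸ h)
      · obtain ⟨h1, h2, -, h4, -⟩ := pb_eq_true.mp (he ▸ h)
        exact ⟨h1, h2, .inl h4⟩
    obtain ⟨y, hpv, hpy⟩ := hmfS.2.1
    exact ⟨y, ⟨fun h => hU (.inl h), hpv, hpy⟩, pab_eq_iff.mpr ⟨hp.trans hmfS.1.symm, ha, hb⟩⟩
  · have hmsE : msE m (E.cfg r) v u := by
      rcases hse with h | h
      · exact pb_eq_true.mp (hs ▸ h)
      · exact pb_eq_true.mp (he ▸ h)
    obtain ⟨y, hpv, hpy⟩ := hmsE.2.1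
    exact ⟨y, ⟨fun h => hU (.inl h), hpv, hpy⟩, pab_eq_iff.mpr ⟨hp.trans hmsE.1.symm, ha, hb⟩⟩
  · simp_all

lemma MMExecution.engaged_of_steady (hvu : m v = some u) {a b : ℕ}
    (h : Engaged G m (E.cfg a) v y)
    (hsteady : ∀ t, a ≤ t → t < b → (E.cfg (t+1)).loc v = (E.cfg t).loc v) :
    ∀ t, a ≤ t → t ≤ b → Engaged G m (E.cfg t) v y := by
  intro t ht htb
  induction t, ht using Nat.le_induction with
  | base => exact h
  | succ t ht ih =>
    obtain ⟨hp, ha, hb, -⟩ := MMConfig.loc_eq_loc_iff.mp (hsteady t ht htb)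
    exact E.engaged_succ (by simp [hvu]) (ih (by omega)) (pab_eq_iff.mpr ⟨hp, ha, hb⟩)

theorem MMExecution.not_three_end_rises (huv : m u = some v) (hvu : m v = some u)
    {r₁ r₂ r₃ : ℕ} (h₁₂ : r₁ < r₂) (h₂₃ : r₂ < r₃)
    (h₁ : (E.cfg r₁).e u = false ∧ (E.cfg (r₁+1)).e u = true)
    (h₂ : (E.cfg r₂).e u = false ∧ (E.cfg (r₂+1)).e u = true)
    (h₃ : (E.cfg r₃).e u = false ∧ (E.cfg (r₃+1)).e u = true) : False := by
  have hchange : ∃ σ < r₂, (E.cfg (σ+1)).loc v ≠ (E.cfg σ).loc v := by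
    by_contra! hsteady
    have := E.end_true_of_partner_steady huv hvu h₁.1 h₁.2 (fun t _ ht => hsteady t ht)
      r₂ h₁₂ le_rfl
    simp [h₂.1] at this
  obtain ⟨σ, hσ, hchg, hsteady⟩ := exists_last_change (fun t => (E.cfg t).loc v) hchange
  replace hsteady : ∀ t, σ + 1 ≤ t → t < r₂ → (E.cfg (t+1)).loc v = (E.cfg t).loc v :=
    fun t h1 h2 => hsteady t h1 h2
  have hloc := MMConfig.loc_eq_loc_iff.mp
    (eq_of_forall_succ_eq (f := fun t => (E.cfg t).loc v) hsteady r₂ (by omega) (by omega))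
  have hse : (E.cfg r₂).s v = true ∨ (E.cfg r₂).e v = true := by
    obtain ⟨x, ⟨-, hev⟩ | hS⟩ := E.holds_of_end_rise huv h₂.1 h₂.2
    · exact .inr hev
    · exact .inl hS.2.2.2
  obtain ⟨y, hy⟩ := E.engaged_of_change hvu hchg (by rwa [← hloc.2.2.2.1, ← hloc.2.2.2.2])
  have hEng := E.engaged_of_steady hvu hy hsteady r₂ (by omega) le_rfl
  have := E.end_forever_of_engaged_partner huv hvu h₂.1 h₂.2 hEng r₃ h₂₃
  simp [h₃.1] at this

end Rises

section Counting

variable {V : Type*} [Fintype V] [LinearOrder V] {G : SimpleGraph V} {m : V → Option V}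
  (E : MMExecution G m) {v w : V}

lemma MMExecution.end_rise_between {i j : ℕ} (hij : i < j) {x x' : V} (hx : m x = none)
    (hpx : (E.cfg i).p x = some w) (hxi : (E.cfg i).e x = false ∧ (E.cfg (i+1)).e x = true)
    (hx' : m x' = none) (hpx' : (E.cfg j).p x' = some w)
    (hxj : (E.cfg j).e x' = false ∧ (E.cfg (j+1)).e x' = true) :
    ∃ t, i ≤ t ∧ t < j ∧ (E.cfg t).e w = false ∧ (E.cfg (t+1)).e w = true := by
  obtain ⟨w₁, hp₁, hadj, hwm, hpw, -⟩ := E.single_end_rise hx hxi.1 hxi.2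
  obtain rfl : w = w₁ := by simpa [hpx] using hp₁
  obtain ⟨w₂, hp₂, -, -, hpw', hewj⟩ := E.single_end_rise hx' hxj.1 hxj.2
  obtain rfl : w = w₂ := by simpa [hpx'] using hp₂
  obtain ⟨v, hwv⟩ := Option.ne_none_iff_exists'.mp hwm
  by_contra! hno
  have hew : ∀ t, i ≤ t → t ≤ j → (E.cfg t).e w = true := fun t h1 h2 => by
    by_contra hf
    obtain ⟨s, h1', h2', hs⟩ :=
      exists_rise_of_false_of_true (b := fun t => (E.cfg t).e w) h2 (by simpa using hf) hewj
    exact absurd hs.2 (by simp [hno s (by omega) h2' hs.1])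
  have hlock : ∀ t, i + 1 ≤ t → t ≤ j → (E.cfg t).p w = some x ∧ (E.cfg t).p x = some w ∧
      (E.cfg t).e x = true := by
    intro t ht htj
    induction t, ht using Nat.le_induction with
    | base =>
      exact ⟨(E.matched_p_succ_of_end hwv (hew (i+1) (by omega) htj)).trans hpw,
        (E.single_parent_succ hx hwm hadj hpx hpw).1, hxi.2⟩
    | succ t ht ih =>
      obtain ⟨hpwt, hpxt, hext⟩ := ih (by omega)
      obtain ⟨hpx1, hex1⟩ := E.single_parent_succ hx hwm hadj hpxt hpwt
      refine ⟨(E.matched_p_succ_of_end hwv (hew (t+1) (by omega) htj)).trans hpwt, hpx1, ?_⟩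
      rcases hex1 with h | h
      · exact h.trans hext
      · exact h.trans (hew t (by omega) (by omega))
  obtain ⟨hpwj, -, hexj⟩ := hlock j hij le_rfl
  obtain rfl : x = x' := by simpa [hpwj] using hpw'
  simp [hxj.1] at hexj

lemma MMExecution.card_le_three_of_charged (hwv : m w = some v) (hvw : m v = some w)
    (F : Finset (ℕ × V))
    (hF : ∀ q ∈ F, m q.2 = none ∧ (E.cfg q.1).p q.2 = some w ∧
      (E.cfg q.1).e q.2 = false ∧ (E.cfg (q.1+1)).e q.2 = true) :
    F.card ≤ 3 := by
  have hinj : Set.InjOn Prod.fst (F : Set (ℕ × V)) := by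
    intro q hq q' hq' htime
    obtain ⟨hx, hp, he0, he1⟩ := hF q hq
    obtain ⟨hx', hp', he0', he1'⟩ := hF q' hq'
    obtain ⟨w₁, hp₁, -, -, hpw, -⟩ := E.single_end_rise hx he0 he1
    obtain ⟨w₂, hp₂, -, -, hpw', -⟩ := E.single_end_rise hx' he0' he1'
    obtain rfl : w₁ = w := by simpa [hp] using hp₁.symm
    obtain rfl : w₂ = w₁ := by simpa [hp'] using hp₂.symm
    rw [htime, hpw'] at hpw
    exact Prod.ext htime (by simpa using hpw.symm)
  by_contra! hcard
  set I := F.image Prod.fst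
  have hI : I.card = F.card := Finset.card_image_of_injOn hinj
  set τ := I.orderEmbOfFin rfl
  have hτ : ∀ k, ∃ x, (τ k, x) ∈ F := fun k => by
    obtain ⟨q, hq, hqk⟩ := Finset.mem_image.mp (I.orderEmbOfFin_mem rfl k)
    exact ⟨q.2, by rw [← hqk]; exact hq⟩
  have hrise : ∀ k l, k < l → ∃ t, τ k ≤ t ∧ t < τ l ∧
      (E.cfg t).e w = false ∧ (E.cfg (t+1)).e w = true := fun k l hkl => by
    obtain ⟨x, hx⟩ := hτ k
    obtain ⟨x', hx'⟩ := hτ l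
    obtain ⟨hxs, hpx, hxe⟩ := hF _ hx
    obtain ⟨hxs', hpx', hxe'⟩ := hF _ hx'
    exact E.end_rise_between (τ.strictMono hkl) hxs hpx hxe hxs' hpx' hxe'
  obtain ⟨t₁, -, h₁, hr₁⟩ := hrise ⟨0, by omega⟩ ⟨1, by omega⟩ (by simp [Fin.lt_def])
  obtain ⟨t₂, h₂, h₂', hr₂⟩ := hrise ⟨1, by omega⟩ ⟨2, by omega⟩ (by simp [Fin.lt_def])
  obtain ⟨t₃, h₃, -, hr₃⟩ := hrise ⟨2, by omega⟩ ⟨3, by omega⟩ (by simp [Fin.lt_def])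
  exact E.not_three_end_rises hwv hvw (by omega) (by omega) hr₁ hr₂ hr₃

end Counting

/-- In any execution, single vertices write `True` into their `end`
variable in at most `3μ` moves in total. -/
theorem stmt19 {V : Type*} [Fintype V] [LinearOrder V]
    (G : SimpleGraph V) (m : V → Option V) (hm : MaxMatchingOn G m)
    (E : MMExecution G m) :
    ∀ T : Finset (ℕ × V),
      (∀ q ∈ T, m q.2 = none ∧ q.2 ∈ E.act q.1 ∧
        (E.cfg q.1).e q.2 = false ∧ (E.cfg (q.1 + 1)).e q.2 = true) →
      T.card ≤ 3 * muV m := by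
  intro T hT
  set parent : ℕ × V → V := fun q => ((E.cfg q.1).p q.2).getD q.2
  have hparent : ∀ q ∈ T, (E.cfg q.1).p q.2 = some (parent q) ∧ m (parent q) ≠ none := by
    intro q hq
    obtain ⟨hx, -, he0, he1⟩ := hT q hq
    obtain ⟨w, hpw, -, hw, -⟩ := E.single_end_rise hx he0 he1
    simp [parent, hpw, hw]
  calc T.card
      = ∑ w ∈ Finset.univ.filter (m · ≠ none), (T.filter (parent · = w)).card :=
        Finset.card_eq_sum_card_fiberwise fun q hq => by simpa using (hparent q hq).2
    _ ≤ ∑ w ∈ Finset.univ.filter (m · ≠ none), 3 := by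
        refine Finset.sum_le_sum fun w hw => ?_
        obtain ⟨v, hwv⟩ := Option.ne_none_iff_exists'.mp (Finset.mem_filter.mp hw).2
        refine E.card_le_three_of_charged hwv (hm.symm w v hwv) _ fun q hq => ?_
        obtain ⟨hqT, rfl⟩ := Finset.mem_filter.mp hq
        obtain ⟨hx, -, he0, he1⟩ := hT q hqT
        exact ⟨hx, (hparent q hqT).1, he0, he1⟩
    _ = 3 * muV m := by rw [Finset.sum_const, smul_eq_mul, mul_comm, muV]
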